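/- arXiv:1301.2514 — 4 statements merged into one kernel-verified Lean document; each statement's English description precedes it below -/
import Mathlib

section
/- Let Φ : (0,1] → ℝ be differentiable with Φ'(r) ≤ 0 for all r ∈ (0,1] and Φ(1) = 0. Let V ∈ ℝ, L > 0 and r* ∈ (0,1) satisfy V²/2 = L²/(2 r*²) + 2 Φ(r*). Then V²/2 − L²/(2r²) − 2Φ(r) > 0 for every r ∈ (r*,1], and the scattering time satisfies τ* := √2 ∫_{r*}^{1} (V²/2 − L²/(2r²) − 2Φ(r))^{−1/2} dr ≤ 2√2 / L. -/
open Set MeasureTheory intervalIntegral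

/-!
Since `Φ` is nonincreasing, `Φ r ≤ Φ r*` for `r ≥ r*`, so the turning-point relation bounds the
effective energy from below by the centrifugal gap
`L²/(2r*²) - L²/(2r²) = L² (r² - r*²) / (2 r*² r²)`. Hence the integrand is at most
`(√2 r*/L) · r / √(r² - r*²)`, the derivative of `(√2 r*/L) · √(r² - r*²)`, so
`τ* ≤ √2 · (√2 r*/L) · √(1 - r*²) ≤ 2 r*/L`.
-/

theorem antitoneOn_of_forall_differentiableAt_deriv_nonpos {D : Set ℝ} (hD : Convex ℝ D)
    {f : ℝ → ℝ} (hf : ∀ x ∈ D, DifferentiableAt ℝ f x) (hf' : ∀ x ∈ D, deriv f x ≤ 0) :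
    AntitoneOn f D :=
  antitoneOn_of_deriv_nonpos hD (fun x hx => (hf x hx).continuousAt.continuousWithinAt)
    (fun x hx => (hf x (interior_subset hx)).differentiableWithinAt)
    fun x hx => hf' x (interior_subset hx)

theorem intervalIntegral.integral_mono_of_nonneg {f g : ℝ → ℝ} {a b : ℝ} (hab : a ≤ b)
    (hg : IntegrableOn g (Ioc a b)) (hf : ∀ x ∈ Ioc a b, 0 ≤ f x)
    (hfg : ∀ x ∈ Ioc a b, f x ≤ g x) :
    ∫ x in a..b, f x ≤ ∫ x in a..b, g x := by
  rw [integral_of_le hab, integral_of_le hab]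
  exact MeasureTheory.integral_mono_of_nonneg ((ae_restrict_iff' measurableSet_Ioc).2 (.of_forall hf))
    hg ((ae_restrict_iff' measurableSet_Ioc).2 (.of_forall hfg))

section SqrtSqSubSq

variable {a b : ℝ}

theorem hasDerivAt_sqrt_sq_sub_sq {r : ℝ} (h : a ^ 2 < r ^ 2) :
    HasDerivAt (fun x => √(x ^ 2 - a ^ 2)) (r / √(r ^ 2 - a ^ 2)) r := by
  convert ((hasDerivAt_pow 2 r).sub_const (a ^ 2)).sqrt (sub_pos.2 h).ne' using 1
  field_simp
  ring

theorem integrableOn_div_sqrt_sq_sub_sq (ha : 0 ≤ a) :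
    IntegrableOn (fun r => r / √(r ^ 2 - a ^ 2)) (Ioc a b) :=
  integrableOn_deriv_of_nonneg (by fun_prop)
    (fun r hr => hasDerivAt_sqrt_sq_sub_sq (pow_lt_pow_left₀ hr.1 ha two_ne_zero))
    fun r hr => div_nonneg (ha.trans hr.1.le) (Real.sqrt_nonneg _)

theorem integral_div_sqrt_sq_sub_sq (ha : 0 ≤ a) (hab : a ≤ b) :
    ∫ r in a..b, r / √(r ^ 2 - a ^ 2) = √(b ^ 2 - a ^ 2) := by
  rw [integral_eq_sub_of_hasDerivAt_of_le hab (by fun_prop)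
    (fun r hr => hasDerivAt_sqrt_sq_sub_sq (pow_lt_pow_left₀ hr.1 ha two_ne_zero))
    ((intervalIntegrable_iff_integrableOn_Ioc_of_le hab).2 (integrableOn_div_sqrt_sq_sub_sq ha))]
  simp

end SqrtSqSubSq

section CentrifugalGap

variable {L a r : ℝ}

theorem centrifugal_gap_pos (hL : L ≠ 0) (ha : 0 < a) (har : a < r) :
    0 < L ^ 2 / (2 * a ^ 2) - L ^ 2 / (2 * r ^ 2) := by
  rw [sub_pos]
  gcongr

theorem one_div_sqrt_centrifugal_gap (hL : 0 < L) (ha : 0 < a) (har : a < r) :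
    1 / √(L ^ 2 / (2 * a ^ 2) - L ^ 2 / (2 * r ^ 2)) = √2 * a / L * (r / √(r ^ 2 - a ^ 2)) := by
  have hr : 0 < r := ha.trans har
  have hgap : L ^ 2 / (2 * a ^ 2) - L ^ 2 / (2 * r ^ 2)
      = (r ^ 2 - a ^ 2) * (L / (√2 * a * r)) ^ 2 := by
    rw [div_pow, mul_pow, mul_pow, Real.sq_sqrt zero_le_two]
    field_simp
  rw [hgap, Real.sqrt_mul (sub_pos.2 (pow_lt_pow_left₀ har ha.le two_ne_zero)).le,
    Real.sqrt_sq (by positivity)]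
  field_simp

theorem one_div_sqrt_le_of_centrifugal_gap_le {E : ℝ} (hL : 0 < L) (ha : 0 < a) (har : a < r)
    (hE : L ^ 2 / (2 * a ^ 2) - L ^ 2 / (2 * r ^ 2) ≤ E) :
    1 / √E ≤ √2 * a / L * (r / √(r ^ 2 - a ^ 2)) := by
  rw [← one_div_sqrt_centrifugal_gap hL ha har]
  exact one_div_le_one_div_of_le (Real.sqrt_pos.2 (centrifugal_gap_pos hL.ne' ha har))
    (Real.sqrt_le_sqrt hE)

end CentrifugalGap

theorem scattering_time_bound_general
    (Φ : ℝ → ℝ)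
    (hΦdiff : ∀ r ∈ Set.Ioc (0:ℝ) 1, DifferentiableAt ℝ Φ r)
    (hΦderiv : ∀ r ∈ Set.Ioc (0:ℝ) 1, deriv Φ r ≤ 0)
    (V L rs : ℝ) (hL : 0 < L) (hrs : rs ∈ Set.Ioo (0:ℝ) 1)
    (hturn : V ^ 2 / 2 = L ^ 2 / (2 * rs ^ 2) + 2 * Φ rs) :
    (∀ r ∈ Set.Ioc rs 1, 0 < V ^ 2 / 2 - L ^ 2 / (2 * r ^ 2) - 2 * Φ r) ∧
    Real.sqrt 2 * ∫ r in rs..1, 1 / Real.sqrt (V ^ 2 / 2 - L ^ 2 / (2 * r ^ 2) - 2 * Φ r)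
      ≤ 2 * Real.sqrt 2 / L := by
  obtain ⟨hrs0, hrs1⟩ := hrs
  have hΦanti : AntitoneOn Φ (Ioc 0 1) :=
    antitoneOn_of_forall_differentiableAt_deriv_nonpos (convex_Ioc 0 1) hΦdiff hΦderiv
  have hgap_le : ∀ r ∈ Ioc rs 1,
      L ^ 2 / (2 * rs ^ 2) - L ^ 2 / (2 * r ^ 2) ≤ V ^ 2 / 2 - L ^ 2 / (2 * r ^ 2) - 2 * Φ r := by
    intro r hr
    have : Φ r ≤ Φ rs := hΦanti ⟨hrs0, hrs1.le⟩ ⟨hrs0.trans hr.1, hr.2⟩ hr.1.le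
    linarith
  refine ⟨fun r hr => (centrifugal_gap_pos hL.ne' hrs0 hr.1).trans_le (hgap_le r hr), ?_⟩
  have hint := intervalIntegral.integral_mono_of_nonneg hrs1.le
    ((integrableOn_div_sqrt_sq_sub_sq (b := 1) hrs0.le).const_mul (√2 * rs / L))
    (fun r _ => by positivity)
    fun r hr => one_div_sqrt_le_of_centrifugal_gap_le hL hrs0 hr.1 (hgap_le r hr)
  rw [intervalIntegral.integral_const_mul, integral_div_sqrt_sq_sub_sq hrs0.le hrs1.le] at hint
  have hsqrt_le_one : √(1 ^ 2 - rs ^ 2) ≤ 1 := Real.sqrt_le_one.2 (by nlinarith)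
  calc √2 * ∫ r in rs..1, 1 / √(V ^ 2 / 2 - L ^ 2 / (2 * r ^ 2) - 2 * Φ r)
      ≤ √2 * (√2 * rs / L) := by
        gcongr
        exact hint.trans (mul_le_of_le_one_right (by positivity) hsqrt_le_one)
    _ = 2 * rs / L := by rw [← mul_div_assoc, ← mul_assoc, Real.mul_self_sqrt zero_le_two]
    _ ≤ 2 * √2 / L := by
        gcongr
        exact hrs1.le.trans (Real.one_le_sqrt.2 one_le_two)

/-- **Scattering time bound** (Lemma 2.1).
For a radial, nonincreasing potential `Φ` of range `1` (in microscopic variables, with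
`Φ 1 = 0`), relative speed `V`, angular momentum `L > 0` and minimal distance
`r* ∈ (0,1)` determined by `V²/2 = L²/(2 r*²) + 2 Φ(r*)`, the effective kinetic energy
`V²/2 − L²/(2r²) − 2Φ(r)` is positive on `(r*,1]` and the scattering time
`τ* = √2 ∫_{r*}^1 (V²/2 − L²/(2r²) − 2Φ(r))^{-1/2} dr` is at most `2√2/L`. -/
theorem scattering_time_bound
    (Φ : ℝ → ℝ)
    (hΦdiff : ∀ r ∈ Set.Ioc (0:ℝ) 1, DifferentiableAt ℝ Φ r)
    (hΦderiv : ∀ r ∈ Set.Ioc (0:ℝ) 1, deriv Φ r ≤ 0)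
    (hΦ1 : Φ 1 = 0)
    (V L rs : ℝ) (hL : 0 < L) (hrs : rs ∈ Set.Ioo (0:ℝ) 1)
    (hturn : V ^ 2 / 2 = L ^ 2 / (2 * rs ^ 2) + 2 * Φ rs) :
    (∀ r ∈ Set.Ioc rs 1, 0 < V ^ 2 / 2 - L ^ 2 / (2 * r ^ 2) - 2 * Φ r) ∧
    Real.sqrt 2 * ∫ r in rs..1, 1 / Real.sqrt (V ^ 2 / 2 - L ^ 2 / (2 * r ^ 2) - 2 * Φ r)
      ≤ 2 * Real.sqrt 2 / L :=
  scattering_time_bound_general Φ hΦdiff hΦderiv V L rs hL hrs hturn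
end

section
/- For every ε > 0, every integer m ≥ 1 and every x₀ ∈ ℝ³, the Lebesgue measure of the set of (x₁,…,x_m) ∈ (ℝ³)^m such that the graph on the m+1 points x₀, x₁, …, x_m, with an edge between x_i and x_k whenever |x_i − x_k| ≤ ε, is connected, is at most (m+1)^{m−1} ((4π/3) ε³)^m. -/
open MeasureTheory Set Metric
open scoped ENNReal

noncomputable section

abbrev R3 : Type := EuclideanSpace ℝ (Fin 3)

/-- The `ε`-cluster graph on a family of points: edges join distinct points at
distance `≤ ε`. -/
def clusterGraph (ε : ℝ) {n : ℕ} (p : Fin n → R3) : SimpleGraph (Fin n) :=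
  SimpleGraph.fromRel (fun i k => dist (p i) (p k) ≤ ε)

/-!
A connected `ε`-cluster contains a breadth-first spanning tree rooted at `x₀`: every `xᵢ` has a
parent within distance `ε` that is strictly closer to `x₀` in graph distance. For a fixed parent
map `p`, the configurations with `|xᵢ - x_{p i}| ≤ ε` are the preimage of a product of balls
under a unipotent linear change of variables, so they have volume exactly `((4π/3) ε³)^m`.
Finally, the Prüfer code recovers a rooted tree on `{0, …, m}` from `m - 1` labels, so there are
at most `(m+1)^(m-1)` parent maps.
-/

open Finset

section PruferCode

variable {α : Type*} [LinearOrder α] {a : α} {q q' : α → α} {S : Finset α}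

-- `q v` is the parent of `v`; the rank `r` rules out cycles, so `q` is a tree on `S` rooted at `a`.
def IsParentMap (a : α) (q : α → α) (S : Finset α) : Prop :=
  ∃ r : α → ℕ, ∀ v ∈ S.erase a, q v ∈ S ∧ r (q v) < r v

def leaves (a : α) (q : α → α) (S : Finset α) : Finset α :=
  (S.erase a).filter fun v => ∀ w ∈ S.erase a, q w ≠ v

-- Stopping at a single non-root vertex drops the final entry of the classical code, always `a`.
def pruferCode (a : α) (q : α → α) (S : Finset α) : List α :=
  if h : 2 ≤ #(S.erase a) ∧ (leaves a q S).Nonempty then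
    q ((leaves a q S).max' h.2) :: pruferCode a q (S.erase ((leaves a q S).max' h.2))
  else []
termination_by #S
decreasing_by
  exact card_erase_lt_of_mem
    (mem_of_mem_erase (filter_subset _ _ ((leaves a q S).max'_mem h.2)))

lemma leaves_subset : leaves a q S ⊆ S.erase a := filter_subset _ _

lemma pruferCode_eq_nil (hS : #(S.erase a) < 2) : pruferCode a q S = [] := by
  rw [pruferCode, dif_neg (fun h => by omega)]

namespace IsParentMap

lemma leaves_nonempty (hq : IsParentMap a q S) (hS : (S.erase a).Nonempty) :
    (leaves a q S).Nonempty := by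
  obtain ⟨r, hr⟩ := hq
  obtain ⟨v, hv, hmax⟩ := exists_max_image (S.erase a) r hS
  refine ⟨v, mem_filter.2 ⟨hv, fun w hw hwv => ?_⟩⟩
  have := (hr w hw).2
  rw [hwv] at this
  exact (hmax w hw).not_gt this

lemma erase_leaf (hq : IsParentMap a q S) {v : α} (hv : v ∈ leaves a q S) :
    IsParentMap a q (S.erase v) := by
  obtain ⟨r, hr⟩ := hq
  refine ⟨r, fun w hw => ?_⟩
  rw [erase_right_comm] at hw
  obtain ⟨hqw, hrw⟩ := hr w (mem_of_mem_erase hw)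
  exact ⟨mem_erase.2 ⟨(mem_filter.1 hv).2 w (mem_of_mem_erase hw), hqw⟩, hrw⟩

lemma apply_eq_root (hq : IsParentMap a q S) (hS : #(S.erase a) ≤ 1) {v : α}
    (hv : v ∈ S.erase a) : q v = a := by
  obtain ⟨r, hr⟩ := hq
  obtain ⟨hqv, hrv⟩ := hr v hv
  by_contra hne
  have := card_le_one.1 hS v hv (q v) (mem_erase.2 ⟨hne, hqv⟩)
  rw [← this] at hrv
  exact lt_irrefl _ hrv

lemma pruferCode_eq_cons (hq : IsParentMap a q S) (hS : 2 ≤ #(S.erase a)) :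
    ∃ v ∈ leaves a q S, (∀ w ∈ leaves a q S, w ≤ v) ∧
      pruferCode a q S = q v :: pruferCode a q (S.erase v) := by
  have hne : (leaves a q S).Nonempty := hq.leaves_nonempty (card_pos.1 (by omega))
  refine ⟨_, max'_mem _ hne, fun w hw => le_max' _ w hw, ?_⟩
  rw [pruferCode, dif_pos ⟨hS, hne⟩]

lemma length_pruferCode (hq : IsParentMap a q S) :
    (pruferCode a q S).length = #(S.erase a) - 1 := by
  induction S using strongInduction with
  | _ S ih =>
    by_cases hS : 2 ≤ #(S.erase a)
    · obtain ⟨v, hv, -, hcode⟩ := hq.pruferCode_eq_cons hS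
      rw [hcode, List.length_cons, ih _ (erase_ssubset (mem_of_mem_erase (leaves_subset hv)))
        (hq.erase_leaf hv), erase_right_comm, card_erase_of_mem (leaves_subset hv)]
      omega
    · rw [pruferCode_eq_nil (by omega)]
      simp only [List.length_nil]
      omega

lemma mem_pruferCode (hq : IsParentMap a q S) {x : α} (hx : x ≠ a) :
    x ∈ pruferCode a q S ↔ ∃ w ∈ S.erase a, q w = x := by
  induction S using strongInduction with
  | _ S ih =>
    by_cases hS : 2 ≤ #(S.erase a)
    · obtain ⟨v, hv, -, hcode⟩ := hq.pruferCode_eq_cons hS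
      have hvS := leaves_subset hv
      rw [hcode, List.mem_cons, ih _ (erase_ssubset (mem_of_mem_erase hvS)) (hq.erase_leaf hv),
        erase_right_comm]
      constructor
      · rintro (rfl | ⟨w, hw, rfl⟩)
        · exact ⟨v, hvS, rfl⟩
        · exact ⟨w, mem_of_mem_erase hw, rfl⟩
      · rintro ⟨w, hw, rfl⟩
        by_cases hwv : w = v
        · exact Or.inl (congrArg q hwv)
        · exact Or.inr ⟨w, mem_erase.2 ⟨hwv, hw⟩, rfl⟩
    · rw [pruferCode_eq_nil (by omega)]
      simp only [List.not_mem_nil, false_iff, not_exists, not_and]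
      exact fun w hw hwx => hx (hwx ▸ hq.apply_eq_root (by omega) hw)

lemma leaves_eq (hq : IsParentMap a q S) :
    leaves a q S = (S.erase a).filter (· ∉ pruferCode a q S) := by
  refine filter_congr fun v hv => ?_
  rw [hq.mem_pruferCode (ne_of_mem_erase hv)]
  simp

lemma eqOn_of_pruferCode_eq (hq : IsParentMap a q S) (hq' : IsParentMap a q' S)
    (hcode : pruferCode a q S = pruferCode a q' S) : Set.EqOn q q' (S.erase a) := by
  induction S using strongInduction with
  | _ S ih =>
    by_cases hS : 2 ≤ #(S.erase a)
    · obtain ⟨v, hv, hvmax, hcodev⟩ := hq.pruferCode_eq_cons hS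
      obtain ⟨v', hv', hvmax', hcodev'⟩ := hq'.pruferCode_eq_cons hS
      have hleaves : leaves a q S = leaves a q' S := by
        rw [hq.leaves_eq, hq'.leaves_eq, hcode]
      have hvv' : v = v' :=
        le_antisymm (hvmax' v (hleaves ▸ hv)) (hvmax v' (hleaves ▸ hv'))
      subst hvv'
      rw [hcodev, hcodev', List.cons.injEq] at hcode
      have hrest := ih _ (erase_ssubset (mem_of_mem_erase (leaves_subset hv)))
        (hq.erase_leaf hv) (hq'.erase_leaf hv') hcode.2
      intro w hw
      by_cases hwv : w = v
      · exact hwv ▸ hcode.1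
      · exact hrest (by rw [erase_right_comm]; exact mem_erase.2 ⟨hwv, hw⟩)
    · intro w hw
      rw [hq.apply_eq_root (by omega) hw, hq'.apply_eq_root (by omega) hw]

end IsParentMap

end PruferCode

lemma card_isParentMap_le (m : ℕ) :
    Nat.card {p : Fin m → Fin (m + 1) // IsParentMap 0 (Fin.cons 0 p : Fin (m + 1) → _) univ}
      ≤ (m + 1) ^ (m - 1) := by
  let code : {p : Fin m → Fin (m + 1) // IsParentMap 0 (Fin.cons 0 p : Fin (m + 1) → _) univ} →
      List.Vector (Fin (m + 1)) (m - 1) := fun p =>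
    ⟨pruferCode 0 (Fin.cons 0 p.1) univ, by simp [p.2.length_pruferCode]⟩
  have hcode : Function.Injective code := fun p p' h => by
    have := p.2.eqOn_of_pruferCode_eq p'.2 (congrArg Subtype.val h)
    exact Subtype.ext (funext fun i => by simpa using this (by simp : i.succ ∈ univ.erase 0))
  simpa using Nat.card_le_card_of_injective code hcode

section ParentShift

variable {R E : Type*} [CommRing R] [AddCommGroup E] [Module R E] {m : ℕ}

def parentShift (p : Fin m → Fin (m + 1)) : (Fin m → E) →ₗ[R] (Fin m → E) :=
  LinearMap.funLeft R E p ∘ₗ (Fin.consLinearEquiv R fun _ => E).toLinearMap ∘ₗ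
    LinearMap.inr R E (Fin m → E)

lemma parentShift_apply (p : Fin m → Fin (m + 1)) (xs : Fin m → E) (i : Fin m) :
    parentShift (R := R) p xs i = (Fin.cons 0 xs : Fin (m + 1) → E) (p i) := rfl

lemma isNilpotent_parentShift {p : Fin m → Fin (m + 1)}
    (hp : IsParentMap 0 (Fin.cons 0 p : Fin (m + 1) → _) univ) :
    IsNilpotent (parentShift (R := R) (E := E) p) := by
  obtain ⟨r, hr⟩ := hp
  have hrank (i : Fin m) : r (p i) < r i.succ := by
    simpa using (hr i.succ (by simp)).2
  have hvanish (k : ℕ) : ∀ (xs : Fin m → E) (i : Fin m), r i.succ < k →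
      (parentShift (R := R) p ^ k) xs i = 0 := by
    induction k with
    | zero => intro xs i hi; omega
    | succ k ih =>
      intro xs i hi
      rw [pow_succ', Module.End.mul_apply, parentShift_apply]
      rcases Fin.eq_zero_or_eq_succ (p i) with h0 | ⟨j, hj⟩
      · rw [h0, Fin.cons_zero]
      · rw [hj, Fin.cons_succ]
        exact ih xs j (by have := hrank i; rw [hj] at this; omega)
  refine ⟨univ.sup (fun i : Fin m => r i.succ) + 1, LinearMap.ext fun xs => funext fun i => ?_⟩
  exact hvanish _ xs i (Nat.lt_succ_of_le (le_sup (f := fun i : Fin m => r i.succ) (mem_univ i)))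

end ParentShift

lemma LinearMap.det_one_sub_of_isNilpotent {R M : Type*} [CommRing R] [IsDomain R]
    [AddCommGroup M] [Module R M] [Module.Finite R M] [Module.Free R M] {N : Module.End R M}
    (hN : IsNilpotent N) : LinearMap.det (1 - N) = 1 := by
  simpa [hN.charpoly_eq_X_pow_finrank] using (LinearMap.eval_charpoly N 1).symm

section NearParent

variable {E : Type*} [NormedAddCommGroup E] {m : ℕ}

def nearParentSet (x₀ : E) (ε : ℝ) (p : Fin m → Fin (m + 1)) : Set (Fin m → E) :=
  {xs | ∀ i, dist (xs i) ((Fin.cons x₀ xs : Fin (m + 1) → E) (p i)) ≤ ε}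

variable [NormedSpace ℝ E] [MeasurableSpace E] [BorelSpace E] [FiniteDimensional ℝ E]

-- `xs ↦ xs - parentShift p xs` is unipotent, hence measure preserving, and it maps the set onto
-- a product of balls.
lemma measure_nearParentSet (μ : Measure E) [μ.IsAddHaarMeasure] {p : Fin m → Fin (m + 1)}
    (hp : IsParentMap 0 (Fin.cons 0 p : Fin (m + 1) → _) univ) (x₀ : E) (ε : ℝ) :
    Measure.pi (fun _ => μ) (nearParentSet x₀ ε p) = μ (closedBall 0 ε) ^ m := by
  set L : Module.End ℝ (Fin m → E) := 1 - parentShift p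
  have hdet : LinearMap.det L = 1 :=
    LinearMap.det_one_sub_of_isNilpotent (isNilpotent_parentShift hp)
  have hcons (xs : Fin m → E) (v : Fin (m + 1)) : (Fin.cons x₀ xs : Fin (m + 1) → E) v =
      (Fin.cons 0 xs : Fin (m + 1) → E) v + (Fin.cons x₀ 0 : Fin (m + 1) → E) v := by
    cases v using Fin.cases <;> simp
  have hset : nearParentSet x₀ ε p =
      L ⁻¹' Set.pi Set.univ fun i => closedBall ((Fin.cons x₀ 0 : Fin (m + 1) → E) (p i)) ε := by
    ext xs
    simp only [nearParentSet, Set.mem_ofPred_eq, Set.mem_preimage, Set.mem_univ_pi,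
      mem_closedBall, dist_eq_norm, hcons xs, sub_add_eq_sub_sub, L, LinearMap.sub_apply,
      Module.End.one_apply, Pi.sub_apply, parentShift_apply]
  rw [hset, Measure.addHaar_preimage_linearMap _ (by simp [hdet]), hdet, Measure.pi_pi]
  simp [Measure.addHaar_closedBall_center]

end NearParent

lemma SimpleGraph.Reachable.exists_adj_dist_lt {V : Type*} {G : SimpleGraph V} {u v : V}
    (h : G.Reachable v u) (hne : v ≠ u) : ∃ w, G.Adj v w ∧ G.dist w u < G.dist v u := by
  obtain ⟨walk, hwalk⟩ := h.exists_walk_length_eq_dist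
  cases walk with
  | nil => exact absurd rfl hne
  | cons hadj rest =>
    rw [SimpleGraph.Walk.length_cons] at hwalk
    exact ⟨_, hadj, (SimpleGraph.dist_le rest).trans_lt (by omega)⟩

-- Parents are neighbours one step closer to `x₀` in graph distance; that distance is the rank.
lemma exists_isParentMap_of_connected {ε : ℝ} {m : ℕ} {x₀ : R3} {xs : Fin m → R3}
    (h : (clusterGraph ε (Fin.cons x₀ xs)).Connected) :
    ∃ p : Fin m → Fin (m + 1),
      IsParentMap 0 (Fin.cons 0 p : Fin (m + 1) → _) univ ∧ xs ∈ nearParentSet x₀ ε p := by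
  choose p hadj hcloser using fun i : Fin m =>
    (h.preconnected i.succ 0).exists_adj_dist_lt (Fin.succ_ne_zero i)
  refine ⟨p, ⟨fun v => (clusterGraph ε (Fin.cons x₀ xs)).dist v 0, fun v hv => ?_⟩, fun i => ?_⟩
  · cases v using Fin.cases with
    | zero => exact absurd rfl (ne_of_mem_erase hv)
    | succ i => simpa using hcloser i
  · obtain ⟨-, hle | hle⟩ := hadj i
    · simpa using hle
    · simpa [dist_comm] using hle

lemma volume_closedBall_R3 {ε : ℝ} (hε : 0 ≤ ε) :
    volume (closedBall (0 : R3) ε) = ENNReal.ofReal (4 * Real.pi / 3 * ε ^ 3) := by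
  rw [EuclideanSpace.volume_closedBall_fin_three, ← ENNReal.ofReal_pow hε,
    ← ENNReal.ofReal_mul (by positivity)]
  ring_nf

theorem volume_cluster_le_general
    (ε : ℝ) (hε : 0 < ε) (m : ℕ) (x₀ : R3) :
    volume {xs : Fin m → R3 | (clusterGraph ε (Fin.cons x₀ xs)).Connected}
      ≤ ENNReal.ofReal (((m + 1 : ℝ) ^ (m - 1)) * ((4 * Real.pi / 3) * ε ^ 3) ^ m) := by
  let T := {p : Fin m → Fin (m + 1) // IsParentMap 0 (Fin.cons 0 p : Fin (m + 1) → _) univ}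
  have : Fintype T := Fintype.ofFinite T
  have hcover : {xs : Fin m → R3 | (clusterGraph ε (Fin.cons x₀ xs)).Connected} ⊆
      ⋃ p : T, nearParentSet x₀ ε p.1 := fun xs hxs => by
    obtain ⟨p, hp, hxs⟩ := exists_isParentMap_of_connected hxs
    exact mem_iUnion.2 ⟨⟨p, hp⟩, hxs⟩
  calc _ ≤ ∑ p : T, volume (nearParentSet x₀ ε p.1) :=
        (measure_mono hcover).trans (measure_iUnion_fintype_le _ _)
    _ = Nat.card T * volume (closedBall (0 : R3) ε) ^ m := by
        rw [Nat.card_eq_fintype_card, ← card_univ, ← nsmul_eq_mul, ← sum_const, volume_pi]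
        exact sum_congr rfl fun p _ => measure_nearParentSet _ p.2 x₀ ε
    _ ≤ ((m + 1) ^ (m - 1) : ℕ) * volume (closedBall (0 : R3) ε) ^ m := by
        gcongr
        exact card_isParentMap_le m
    _ = _ := by
        rw [volume_closedBall_R3 hε.le, ← ENNReal.ofReal_pow (by positivity),
          ← ENNReal.ofReal_natCast, ← ENNReal.ofReal_mul (by positivity)]
        push_cast
        rfl

/-- **Volume of an `ε`-cluster** (volume estimate behind Lemma 5.1). For every `ε > 0`,
`m ≥ 1` and `x₀ ∈ ℝ³`, the Lebesgue measure of the set of `(x₁,…,x_m) ∈ (ℝ³)^m` such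
that the graph on `x₀, x₁, …, x_m` with edges between points at distance `≤ ε` is
connected is at most `(m+1)^{m-1} ((4π/3) ε³)^m`. -/
theorem volume_cluster_le
    (ε : ℝ) (hε : 0 < ε) (m : ℕ) (hm : 1 ≤ m) (x₀ : R3) :
    volume {xs : Fin m → R3 | (clusterGraph ε (Fin.cons x₀ xs)).Connected}
      ≤ ENNReal.ofReal (((m + 1 : ℝ) ^ (m - 1)) * ((4 * Real.pi / 3) * ε ^ 3) ^ m) :=
  volume_cluster_le_general ε hε m x₀
end
end

section
/- For every β > 0 and t > 0 there exists a constant C = C(β,t) > 0 such that for every η ∈ ℝ³ and every θ ∈ (0,1]: ∫_0^t ∫_{ℝ³} 𝟙{ |v − η| s ≤ 2 t θ } e^{−(β/2)|v|²} dv ds ≤ C θ. -/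
open MeasureTheory Set Metric
open scoped ENNReal

noncomputable section

/-- Real-valued indicator of a proposition. -/
def ind (P : Prop) : ℝ :=
  letI := Classical.propDecidable P
  if P then 1 else 0

/-!
Split the time integral at `s₀ = θ t`. For `s ≤ s₀` the inner integral is at most the total
Gaussian mass, which contributes `θ t ∫ e^{-(β/2)|v|²}`. For `s ≥ s₀` the constraint confines
`v` to the ball of radius `2tθ/s` around `η`, whose volume is `|B₁| (2tθ/s)³`; since
`∫_{s₀}^∞ s⁻³ ds = 1/(2 s₀²)`, this contributes `4 |B₁| t θ`.
-/

lemma ind_nonneg (P : Prop) : 0 ≤ ind P := by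
  unfold ind; split <;> norm_num

lemma ind_le_one (P : Prop) : ind P ≤ 1 := by
  unfold ind; split <;> norm_num

lemma ind_mono {P Q : Prop} (h : P → Q) : ind P ≤ ind Q := by
  unfold ind; split
  · rw [if_pos (h ‹P›)]
  · split <;> norm_num

lemma ind_mul_eq_indicator {α : Type*} (S : Set α) (g : α → ℝ) (v : α) :
    ind (v ∈ S) * g v = S.indicator g v := by
  unfold ind; split
  · rw [Set.indicator_of_mem ‹v ∈ S›, one_mul]
  · rw [Set.indicator_of_notMem ‹v ∉ S›, zero_mul]

lemma integral_inv_pow_succ_le {a b : ℝ} (ha : 0 < a) (hab : a ≤ b) {n : ℕ} (hn : 0 < n) :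
    ∫ s in a..b, (s ^ (n + 1))⁻¹ ≤ (n * a ^ n)⁻¹ := by
  have h0 : (0 : ℝ) ∉ uIcc a b := by
    rw [uIcc_of_le hab]; exact fun h => ha.not_ge h.1
  have hn0 : (n : ℝ) ≠ 0 := by positivity
  calc ∫ s in a..b, (s ^ (n + 1))⁻¹ = ∫ s in a..b, s ^ (-((n + 1 : ℕ) : ℤ)) := by
        simp only [zpow_neg, zpow_natCast]
    _ = ((a ^ n)⁻¹ - (b ^ n)⁻¹) / n := by
        rw [integral_zpow (Or.inr ⟨by omega, h0⟩)]
        rw [show -((n + 1 : ℕ) : ℤ) + 1 = -(n : ℤ) by push_cast; ring]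
        push_cast
        rw [show -((n : ℝ) + 1) + 1 = -n by ring]
        simp only [zpow_neg, zpow_natCast]
        field_simp
        ring
    _ ≤ (a ^ n)⁻¹ / n := by
        gcongr; exact sub_le_self _ (inv_nonneg.2 (pow_nonneg (ha.le.trans hab) n))
    _ = (n * a ^ n)⁻¹ := by rw [mul_inv, div_eq_mul_inv, mul_comm]

theorem integral_le_of_le_of_le_div_pow {F : ℝ → ℝ} {G A s₀ t : ℝ} {n : ℕ}
    (hF : IntervalIntegrable F volume 0 t) (hFG : ∀ s, F s ≤ G)
    (hFA : ∀ s, 0 < s → F s ≤ A / s ^ (n + 1)) (hA : 0 ≤ A) (hn : 0 < n)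
    (hs₀ : 0 < s₀) (hs₀t : s₀ ≤ t) :
    ∫ s in 0..t, F s ≤ s₀ * G + A / (n * s₀ ^ n) := by
  have hF₁ : IntervalIntegrable F volume 0 s₀ :=
    hF.mono_set (uIcc_subset_uIcc left_mem_uIcc (mem_uIcc_of_le hs₀.le hs₀t))
  have hF₂ : IntervalIntegrable F volume s₀ t :=
    hF.mono_set (uIcc_subset_uIcc (mem_uIcc_of_le hs₀.le hs₀t) right_mem_uIcc)
  have h_near : ∫ s in 0..s₀, F s ≤ s₀ * G := by
    simpa using intervalIntegral.integral_mono_on hs₀.le hF₁ intervalIntegrable_const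
      fun s _ => hFG s
  have h_far : ∫ s in s₀..t, F s ≤ A / (n * s₀ ^ n) := by
    have hcont : ContinuousOn (fun s : ℝ => A * (s ^ (n + 1))⁻¹) (uIcc s₀ t) := by
      refine continuousOn_const.mul ((continuousOn_pow _).inv₀ fun s hs => ?_)
      rw [uIcc_of_le hs₀t] at hs
      exact pow_ne_zero _ (hs₀.trans_le hs.1).ne'
    calc ∫ s in s₀..t, F s ≤ ∫ s in s₀..t, A * (s ^ (n + 1))⁻¹ :=
          intervalIntegral.integral_mono_on hs₀t hF₂ hcont.intervalIntegrable
            fun s hs => (hFA s (hs₀.trans_le hs.1)).trans_eq (div_eq_mul_inv _ _)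
      _ = A * ∫ s in s₀..t, (s ^ (n + 1))⁻¹ := intervalIntegral.integral_const_mul _ _
      _ ≤ A * (n * s₀ ^ n)⁻¹ :=
          mul_le_mul_of_nonneg_left (integral_inv_pow_succ_le hs₀ hs₀t hn) hA
      _ = A / (n * s₀ ^ n) := (div_eq_mul_inv _ _).symm
  rw [← intervalIntegral.integral_add_adjacent_intervals hF₁ hF₂]
  exact add_le_add h_near h_far

lemma integrable_exp_neg_mul_sq_norm {V : Type*} [NormedAddCommGroup V] [InnerProductSpace ℝ V]
    [FiniteDimensional ℝ V] [MeasurableSpace V] [BorelSpace V] {b : ℝ} (hb : 0 < b) :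
    Integrable fun v : V => Real.exp (-b * ‖v‖ ^ 2) :=
  .of_integral_ne_zero <| by
    rw [GaussianFourier.integral_rexp_neg_mul_sq_norm hb]; positivity

section ConfinedMass

variable {E : Type*} [NormedAddCommGroup E] [MeasurableSpace E] (μ : Measure E)

def confinedMass (g : E → ℝ) (η : E) (r s : ℝ) : ℝ :=
  ∫ v, ind (‖v - η‖ * s ≤ r) * g v ∂μ

variable {μ} {g : E → ℝ}

lemma confinedMass_le_integral (hg0 : 0 ≤ g) (hgi : Integrable g μ) (η : E) (r s : ℝ) :
    confinedMass μ g η r s ≤ ∫ v, g v ∂μ :=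
  integral_mono_of_nonneg (.of_forall fun v => mul_nonneg (ind_nonneg _) (hg0 v)) hgi
    (.of_forall fun v => mul_le_of_le_one_left (hg0 v) (ind_le_one _))

variable [OpensMeasurableSpace E]

lemma confinedMass_antitone (hg0 : 0 ≤ g) (hgi : Integrable g μ) (η : E) (r : ℝ) :
    Antitone (confinedMass μ g η r) := by
  intro a b hab
  have hmeas : MeasurableSet {v : E | ‖v - η‖ * a ≤ r} :=
    measurableSet_le (Continuous.measurable (by fun_prop)) measurable_const
  refine integral_mono_of_nonneg
    (.of_forall fun v => mul_nonneg (ind_nonneg _) (hg0 v))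
    ((hgi.indicator hmeas).congr (.of_forall fun v => (ind_mul_eq_indicator _ g v).symm))
    (.of_forall fun v => mul_le_mul_of_nonneg_right (ind_mono fun h => ?_) (hg0 v))
  exact (mul_le_mul_of_nonneg_left hab (norm_nonneg _)).trans h

lemma confinedMass_le_measureReal_closedBall (hg0 : 0 ≤ g) (hg1 : ∀ v, g v ≤ 1)
    (η : E) (r : ℝ) {s : ℝ} (hs : 0 < s) (hfin : μ (closedBall η (r / s)) ≠ ⊤) :
    confinedMass μ g η r s ≤ μ.real (closedBall η (r / s)) := by
  rw [← integral_indicator_one measurableSet_closedBall]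
  refine integral_mono_of_nonneg (.of_forall fun v => mul_nonneg (ind_nonneg _) (hg0 v))
    ((integrableOn_const hfin).integrable_indicator measurableSet_closedBall)
    (.of_forall fun v => ?_)
  rw [← ind_mul_eq_indicator]
  refine (mul_le_of_le_one_right (ind_nonneg _) (hg1 v)).trans ?_
  rw [Pi.one_apply, mul_one]
  refine ind_mono fun h => ?_
  rw [mem_closedBall, dist_eq_norm, le_div_iff₀ hs]
  exact h

end ConfinedMass

theorem integral_confinedMass_le {E : Type*} [NormedAddCommGroup E] [NormedSpace ℝ E]
    [FiniteDimensional ℝ E] [MeasurableSpace E] [BorelSpace E] (μ : Measure E)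
    [μ.IsAddHaarMeasure] {n : ℕ} (hd : Module.finrank ℝ E = n + 1) (hn : 0 < n) {g : E → ℝ}
    (hg0 : 0 ≤ g) (hg1 : ∀ v, g v ≤ 1) (hgi : Integrable g μ) (η : E) {r s₀ t : ℝ}
    (hr : 0 ≤ r) (hs₀ : 0 < s₀) (hs₀t : s₀ ≤ t) :
    ∫ s in 0..t, confinedMass μ g η r s
      ≤ s₀ * ∫ v, g v ∂μ + μ.real (ball 0 1) * r ^ (n + 1) / (n * s₀ ^ n) := by
  refine integral_le_of_le_of_le_div_pow (confinedMass_antitone hg0 hgi η r).intervalIntegrable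
    (confinedMass_le_integral hg0 hgi η r) (fun s hs => ?_) (by positivity) hn hs₀ hs₀t
  refine (confinedMass_le_measureReal_closedBall hg0 hg1 η r hs
    measure_closedBall_lt_top.ne).trans_eq ?_
  rw [Measure.addHaar_real_closedBall μ η (div_nonneg hr hs.le), hd, div_pow]
  ring

/-- **Non-separation estimate** (used in the proof of Lemma 7.2): for every `β, t > 0`
there is `C > 0` such that for every progenitor velocity `η ∈ ℝ³` and every
`θ ∈ (0,1]`,
`∫_0^t ∫_{ℝ³} 𝟙{|v − η| s ≤ 2 t θ} e^{−(β/2)|v|²} dv ds ≤ C θ`. -/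
theorem non_separation_estimate
    (β t : ℝ) (hβ : 0 < β) (ht : 0 < t) :
    ∃ C > (0 : ℝ),
      ∀ η : R3, ∀ θ : ℝ, 0 < θ → θ ≤ 1 →
        (∫ s in (0 : ℝ)..t,
            ∫ v : R3, ind (‖v - η‖ * s ≤ 2 * t * θ) * Real.exp (-(β / 2) * ‖v‖ ^ 2))
          ≤ C * θ := by
  set g : R3 → ℝ := fun v => Real.exp (-(β / 2) * ‖v‖ ^ 2)
  have hg0 : 0 ≤ g := fun v => (Real.exp_pos _).le
  have hg1 : ∀ v, g v ≤ 1 := fun v => Real.exp_le_one_iff.2 <| by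
    have := mul_nonneg (half_pos hβ).le (sq_nonneg ‖v‖); linarith
  have hK : 0 < volume.real (ball (0 : R3) 1) :=
    ENNReal.toReal_pos (measure_ball_pos _ _ one_pos).ne' measure_ball_lt_top.ne
  refine ⟨t * (∫ v, g v) + 4 * volume.real (ball (0 : R3) 1) * t,
    by have := integral_nonneg (μ := volume) hg0; positivity, fun η θ hθ hθ1 => ?_⟩
  calc _ = ∫ s in (0 : ℝ)..t, confinedMass volume g η (2 * t * θ) s := rfl
    _ ≤ θ * t * (∫ v, g v) + volume.real (ball (0 : R3) 1) * (2 * t * θ) ^ (2 + 1)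
          / (2 * (θ * t) ^ 2) :=
        integral_confinedMass_le volume finrank_euclideanSpace_fin two_pos hg0 hg1
          (integrable_exp_neg_mul_sq_norm (half_pos hβ)) η (r := 2 * t * θ) (by positivity)
          (by positivity) (mul_le_of_le_one_left ht.le hθ1)
    _ = _ := by field_simp; ring
end
end

section
/- For every measurable function ψ : ℝ × ℝ → [0,∞], one has the identity ∫_{S²} ∫_{ℝ³} |ν · V| ψ(|ν × V|², |V|²) dV dν = 4π² ∫_0^∞ ( ∫_0^Y ψ(X,Y) dX ) dY, where dν is the surface measure on the unit sphere S² ⊂ ℝ³, · is the scalar product and × the cross product in ℝ³. -/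
/-!
For a unit vector `ν`, Lagrange's identity gives `|ν × V|² = |V|² - (ν·V)²`, and a reflection
sending `ν` to `e₀` turns the inner integral into `∫ |V₀| ψ(V₁² + V₂², |V|²) dV`, which no longer
depends on `ν`. Polar coordinates in the `(V₁, V₂)`-plane (`X = V₁² + V₂²`, contributing `π`) and
the substitution `Y = V₀² + X` reduce it to `π ∫_{X>0} ∫_{Y>X} ψ(X, Y)`; the sphere has area `4π`.
-/

open MeasureTheory Set Metric
open scoped ENNReal

noncomputable section

/-- The surface measure on the unit sphere `S² ⊂ ℝ³`. -/
def sphereMeasure : Measure (Metric.sphere (0 : R3) 1) := (volume : Measure R3).toSphere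

/-- The cross product on `ℝ³` (with the Euclidean norm). -/
def cross3 (v u : R3) : R3 :=
  (EuclideanSpace.equiv (Fin 3) ℝ).symm
    ![v 1 * u 2 - v 2 * u 1, v 2 * u 0 - v 0 * u 2, v 0 * u 1 - v 1 * u 0]

theorem lintegral_fun_norm_addHaar {E : Type*} [NormedAddCommGroup E] [NormedSpace ℝ E]
    [MeasurableSpace E] [BorelSpace E] [FiniteDimensional ℝ E] [Nontrivial E]
    (μ : Measure E) [μ.IsAddHaarMeasure] {f : ℝ → ℝ≥0∞} (hf : Measurable f) :
    ∫⁻ x, f ‖x‖ ∂μ = Module.finrank ℝ E * μ (ball 0 1) *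
      ∫⁻ y in Ioi (0 : ℝ), ENNReal.ofReal (y ^ (Module.finrank ℝ E - 1)) * f y :=
  calc ∫⁻ x, f ‖x‖ ∂μ = ∫⁻ x : ({0}ᶜ : Set E), f ‖(x : E)‖ ∂(μ.comap (↑)) := by
        rw [lintegral_subtype_comap (measurableSet_singleton _).compl (fun x => f ‖x‖),
          restrict_compl_singleton]
    _ = ∫⁻ p, f p.2 ∂(μ.toSphere.prod (.volumeIoiPow (Module.finrank ℝ E - 1))) := by
        simpa using (μ.measurePreserving_homeomorphUnitSphereProd.lintegral_comp_emb
          (Homeomorph.measurableEmbedding _) (f ∘ Subtype.val ∘ Prod.snd))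
    _ = μ.toSphere univ * ∫⁻ y, f y ∂(.volumeIoiPow (Module.finrank ℝ E - 1)) := by
        rw [lintegral_prod _ (by fun_prop)]
        simp [lintegral_const, mul_comm]
    _ = _ := by
        rw [Measure.volumeIoiPow,
          lintegral_withDensity_eq_lintegral_mul _ (by fun_prop) (by fun_prop),
          Measure.toSphere_apply_univ]
        congr 1
        exact lintegral_subtype_comap measurableSet_Ioi (fun y => ENNReal.ofReal (y ^ _) * f y)

theorem image_sq_add_Ioi_zero (a : ℝ) : (fun r : ℝ => r ^ 2 + a) '' Ioi 0 = Ioi a := by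
  ext y
  constructor
  · rintro ⟨r, hr, rfl⟩
    exact lt_add_of_pos_left a (pow_pos hr 2)
  · intro hy
    refine ⟨√(y - a), Real.sqrt_pos.2 (sub_pos.2 hy), ?_⟩
    simp [Real.sq_sqrt (sub_pos.2 hy).le]

theorem lintegral_Ioi_ofReal_two_mul_comp_sq_add (k : ℝ → ℝ≥0∞) (a : ℝ) :
    ∫⁻ r in Ioi (0 : ℝ), ENNReal.ofReal (2 * r) * k (r ^ 2 + a) = ∫⁻ y in Ioi a, k y := by
  have hderiv : ∀ r ∈ Ioi (0 : ℝ), HasDerivWithinAt (fun r => r ^ 2 + a) (2 * r) (Ioi 0) r :=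
    fun r _ => by simpa using ((hasDerivAt_pow 2 r).add_const a).hasDerivWithinAt
  have hinj : InjOn (fun r : ℝ => r ^ 2 + a) (Ioi 0) := fun r hr s hs h => by
    simpa [hr.out.le, hs.out.le, pow_left_inj₀] using h
  rw [← image_sq_add_Ioi_zero a, lintegral_image_eq_lintegral_abs_deriv_mul measurableSet_Ioi
    hderiv hinj]
  refine setLIntegral_congr_fun measurableSet_Ioi fun r hr => ?_
  rw [abs_of_pos (by simpa using hr.out)]

theorem lintegral_ofReal_abs_mul_comp_sq_add {k : ℝ → ℝ≥0∞} (hk : Measurable k) (a : ℝ) :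
    ∫⁻ t, ENNReal.ofReal |t| * k (t ^ 2 + a) = ∫⁻ y in Ioi a, k y := by
  have h := lintegral_fun_norm_addHaar (volume : Measure ℝ)
    (f := fun r => ENNReal.ofReal r * k (r ^ 2 + a)) (by fun_prop)
  calc ∫⁻ t, ENNReal.ofReal |t| * k (t ^ 2 + a)
      = 2 * ∫⁻ r in Ioi (0 : ℝ), ENNReal.ofReal r * k (r ^ 2 + a) := by
        simpa [sq_abs] using h
    _ = ∫⁻ r in Ioi (0 : ℝ), ENNReal.ofReal (2 * r) * k (r ^ 2 + a) := by
        rw [← lintegral_const_mul' 2 _ ENNReal.ofNat_ne_top]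
        congr with r
        rw [ENNReal.ofReal_mul zero_le_two]
        simp [mul_assoc]
    _ = ∫⁻ y in Ioi a, k y := lintegral_Ioi_ofReal_two_mul_comp_sq_add k a

theorem lintegral_comp_norm_sq_of_finrank_eq_two {E : Type*} [NormedAddCommGroup E]
    [InnerProductSpace ℝ E] [FiniteDimensional ℝ E] [MeasurableSpace E] [BorelSpace E]
    (hE : Module.finrank ℝ E = 2) {k : ℝ → ℝ≥0∞} (hk : Measurable k) :
    ∫⁻ x : E, k (‖x‖ ^ 2) = ENNReal.ofReal Real.pi * ∫⁻ y in Ioi (0 : ℝ), k y := by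
  have : Nontrivial E := Module.nontrivial_of_finrank_eq_succ hE
  have h := lintegral_fun_norm_addHaar (volume : Measure E) (f := fun r => k (r ^ 2)) (by fun_prop)
  rw [InnerProductSpace.volume_ball_of_dim_even (k := 1) hE, hE] at h
  calc ∫⁻ x : E, k (‖x‖ ^ 2)
      = ENNReal.ofReal Real.pi * (2 * ∫⁻ r in Ioi (0 : ℝ), ENNReal.ofReal r * k (r ^ 2)) := by
        simp [h]
        ring
    _ = ENNReal.ofReal Real.pi * ∫⁻ r in Ioi (0 : ℝ), ENNReal.ofReal (2 * r) * k (r ^ 2 + 0) := by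
        rw [← lintegral_const_mul' 2 _ ENNReal.ofNat_ne_top]
        congr with r
        rw [ENNReal.ofReal_mul zero_le_two, add_zero]
        simp [mul_assoc]
    _ = ENNReal.ofReal Real.pi * ∫⁻ y in Ioi (0 : ℝ), k y := by
        rw [lintegral_Ioi_ofReal_two_mul_comp_sq_add k 0]

theorem EuclideanSpace.lintegral_fin_three_cylindrical {G : ℝ → ℝ → ℝ≥0∞}
    (hG : Measurable (Function.uncurry G)) :
    ∫⁻ V : EuclideanSpace ℝ (Fin 3), G (V 0) (V 1 ^ 2 + V 2 ^ 2) =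
      ENNReal.ofReal Real.pi * ∫⁻ t, ∫⁻ y in Ioi (0 : ℝ), G t y := by
  calc ∫⁻ V : EuclideanSpace ℝ (Fin 3), G (V 0) (V 1 ^ 2 + V 2 ^ 2)
      = ∫⁻ v : Fin 3 → ℝ, G (v 0) (v 1 ^ 2 + v 2 ^ 2) :=
        ((EuclideanSpace.volume_preserving_symm_measurableEquiv_toLp (Fin 3)).symm _
          ).lintegral_comp_emb (MeasurableEquiv.measurableEmbedding _)
          (fun V : EuclideanSpace ℝ (Fin 3) => G (V 0) (V 1 ^ 2 + V 2 ^ 2)) |>.symm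
    _ = ∫⁻ p : ℝ × (Fin 2 → ℝ), G p.1 (p.2 0 ^ 2 + p.2 1 ^ 2) :=
        ((volume_preserving_piFinSuccAbove (fun _ : Fin 3 => ℝ) 0).symm _).lintegral_comp_emb
          (MeasurableEquiv.measurableEmbedding _)
          (fun v : Fin 3 → ℝ => G (v 0) (v 1 ^ 2 + v 2 ^ 2)) |>.symm
    _ = ∫⁻ t, ∫⁻ w : EuclideanSpace ℝ (Fin 2), G t (‖w‖ ^ 2) := by
        rw [Measure.volume_eq_prod, lintegral_prod _ (by fun_prop)]
        congr with t
        simp only [EuclideanSpace.norm_sq_eq, Fin.sum_univ_two, Real.norm_eq_abs, sq_abs]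
        exact ((EuclideanSpace.volume_preserving_symm_measurableEquiv_toLp (Fin 2)
          ).lintegral_comp_emb (MeasurableEquiv.measurableEmbedding _)
          (fun w : Fin 2 → ℝ => G t (w 0 ^ 2 + w 1 ^ 2))).symm
    _ = ∫⁻ t, ENNReal.ofReal Real.pi * ∫⁻ y in Ioi (0 : ℝ), G t y := by
        congr with t
        exact lintegral_comp_norm_sq_of_finrank_eq_two finrank_euclideanSpace_fin (by fun_prop)
    _ = ENNReal.ofReal Real.pi * ∫⁻ t, ∫⁻ y in Ioi (0 : ℝ), G t y :=
        lintegral_const_mul _ hG.lintegral_prod_right'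

theorem lintegral_comp_inner_of_norm_eq {E : Type*} [NormedAddCommGroup E]
    [InnerProductSpace ℝ E] [FiniteDimensional ℝ E] [MeasurableSpace E] [BorelSpace E]
    {u v : E} (h : ‖u‖ = ‖v‖) (f : ℝ → ℝ → ℝ≥0∞) :
    ∫⁻ x, f (inner ℝ u x) ‖x‖ = ∫⁻ x, f (inner ℝ v x) ‖x‖ := by
  set T := (ℝ ∙ (u - v))ᗮ.reflection
  have hTu : T u = v := Submodule.reflection_sub h
  symm
  rw [← T.measurePreserving.lintegral_comp_emb T.toHomeomorph.measurableEmbedding]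
  simp_rw [← hTu]
  simp [LinearIsometryEquiv.inner_map_map]

theorem lintegral_Ioi_lintegral_Ioi_eq_lintegral_Ioi_lintegral_Ioc (a : ℝ)
    {f : ℝ × ℝ → ℝ≥0∞} (hf : Measurable f) :
    ∫⁻ x in Ioi a, ∫⁻ y in Ioi x, f (x, y) = ∫⁻ y in Ioi a, ∫⁻ x in Ioc a y, f (x, y) := by
  set s := {p : ℝ × ℝ | a < p.1 ∧ p.1 < p.2}
  have hs : MeasurableSet s := by measurability
  calc ∫⁻ x in Ioi a, ∫⁻ y in Ioi x, f (x, y) = ∫⁻ x, ∫⁻ y, s.indicator f (x, y) := by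
        rw [← lintegral_indicator measurableSet_Ioi]
        congr with x
        by_cases hx : x ∈ Ioi a
        · rw [indicator_of_mem hx, ← lintegral_indicator measurableSet_Ioi]
          congr with y
          simp [s, indicator, mem_Ioi.1 hx]
        · have hempty : ∀ y, (x, y) ∉ s := fun y hxy => hx hxy.1
          simp [indicator_of_notMem hx, indicator_of_notMem (hempty _)]
    _ = ∫⁻ y, ∫⁻ x, s.indicator f (x, y) := lintegral_lintegral_swap (by fun_prop)
    _ = ∫⁻ y in Ioi a, ∫⁻ x in Ioc a y, f (x, y) := by
        rw [← lintegral_indicator measurableSet_Ioi]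
        congr with y
        by_cases hy : y ∈ Ioi a
        · rw [indicator_of_mem hy, ← setLIntegral_congr Ioo_ae_eq_Ioc,
            ← lintegral_indicator measurableSet_Ioo]
          -- the slice of `s` at height `y` is `Ioo a y` by definition
          rfl
        · have hempty : ∀ x, (x, y) ∉ s := fun x hx => hy (hx.1.trans hx.2)
          simp [indicator_of_notMem hy, indicator_of_notMem (hempty _)]

theorem norm_cross3_sq (u v : R3) : ‖cross3 u v‖ ^ 2 = ‖u‖ ^ 2 * ‖v‖ ^ 2 - inner ℝ u v ^ 2 := by
  simp only [EuclideanSpace.norm_sq_eq, PiLp.inner_apply, Fin.sum_univ_three, cross3]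
  simp
  ring

theorem sphereMeasure_univ : sphereMeasure univ = ENNReal.ofReal (4 * Real.pi) := by
  rw [sphereMeasure, Measure.toSphere_apply_univ, finrank_euclideanSpace_fin,
    EuclideanSpace.volume_ball_fin_three, show 4 * Real.pi = 3 * (Real.pi * 4 / 3) by ring,
    ENNReal.ofReal_mul zero_le_three]
  simp

theorem lintegral_abs_inner_mul_comp_cross3 {ψ : ℝ × ℝ → ℝ≥0∞} (hψ : Measurable ψ) {ν : R3}
    (hν : ‖ν‖ = 1) :
    ∫⁻ V : R3, ENNReal.ofReal |inner ℝ ν V| * ψ (‖cross3 ν V‖ ^ 2, ‖V‖ ^ 2) =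
      ENNReal.ofReal Real.pi * ∫⁻ x in Ioi (0 : ℝ), ∫⁻ y in Ioi x, ψ (x, y) := by
  set e₀ : R3 := EuclideanSpace.single 0 1
  set G : ℝ → ℝ → ℝ≥0∞ := fun t x => ENNReal.ofReal |t| * ψ (x, t ^ 2 + x)
  have hG : Measurable (Function.uncurry G) := by fun_prop
  calc ∫⁻ V : R3, ENNReal.ofReal |inner ℝ ν V| * ψ (‖cross3 ν V‖ ^ 2, ‖V‖ ^ 2)
      = ∫⁻ V : R3, ENNReal.ofReal |inner ℝ ν V| * ψ (‖V‖ ^ 2 - inner ℝ ν V ^ 2, ‖V‖ ^ 2) := by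
        simp_rw [norm_cross3_sq, hν, one_pow, one_mul]
    _ = ∫⁻ V : R3, ENNReal.ofReal |inner ℝ e₀ V| * ψ (‖V‖ ^ 2 - inner ℝ e₀ V ^ 2, ‖V‖ ^ 2) :=
        lintegral_comp_inner_of_norm_eq (by simp [e₀, hν])
          (fun s r => ENNReal.ofReal |s| * ψ (r ^ 2 - s ^ 2, r ^ 2))
    _ = ∫⁻ V : R3, G (V 0) (V 1 ^ 2 + V 2 ^ 2) := by
        congr with V
        simp [G, e₀, EuclideanSpace.norm_sq_eq, EuclideanSpace.inner_single_left,
          Fin.sum_univ_three]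
        ring_nf
    _ = ENNReal.ofReal Real.pi * ∫⁻ t, ∫⁻ x in Ioi (0 : ℝ), G t x :=
        EuclideanSpace.lintegral_fin_three_cylindrical hG
    _ = ENNReal.ofReal Real.pi * ∫⁻ x in Ioi (0 : ℝ), ∫⁻ t, G t x := by
        rw [lintegral_lintegral_swap hG.aemeasurable]
    _ = ENNReal.ofReal Real.pi * ∫⁻ x in Ioi (0 : ℝ), ∫⁻ y in Ioi x, ψ (x, y) := by
        congr with x
        exact lintegral_ofReal_abs_mul_comp_sq_add (k := fun y => ψ (x, y)) (by fun_prop) x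

/-- **Change of variables to conserved quantities** (final computation in the proof of
Lemma 8.1): for every measurable `ψ : ℝ × ℝ → [0,∞]`,
`∫_{S²} ∫_{ℝ³} |ν·V| ψ(|ν × V|², |V|²) dV dν = 4π² ∫_0^∞ ∫_0^Y ψ(X,Y) dX dY`. -/
theorem scattering_parameters_change_of_variables
    (ψ : ℝ × ℝ → ℝ≥0∞) (hψ : Measurable ψ) :
    (∫⁻ ν : Metric.sphere (0 : R3) 1,
        (∫⁻ V : R3,
          ENNReal.ofReal |(inner ℝ (ν : R3) V : ℝ)| *
            ψ (‖cross3 (ν : R3) V‖ ^ 2, ‖V‖ ^ 2))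
      ∂sphereMeasure)
      = ENNReal.ofReal (4 * Real.pi ^ 2) *
          ∫⁻ Y in Set.Ioi (0 : ℝ), ∫⁻ X in Set.Ioc (0 : ℝ) Y, ψ (X, Y) := by
  simp_rw [lintegral_abs_inner_mul_comp_cross3 hψ (norm_eq_of_mem_sphere _), lintegral_const,
    sphereMeasure_univ, lintegral_Ioi_lintegral_Ioi_eq_lintegral_Ioi_lintegral_Ioc 0 hψ]
  rw [show 4 * Real.pi ^ 2 = Real.pi * (4 * Real.pi) by ring, ENNReal.ofReal_mul Real.pi_nonneg]
  ring
end
end
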